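/- For every n ∈ ℕ, the rational number (27·7³)^n · (2/7)_n (13/21)_n (20/21)_n / ((6/7)_n · (n!)²) = 9261^n · (2/7)_n (13/21)_n (20/21)_n / ((6/7)_n · (n!)²) is an integer. (Equivalently, the hypergeometric series ₃F₂([2/7, 13/21, 20/21], [6/7, 1], 27·7³·x) has integer Taylor coefficients.) -/

import Mathlib

/-!
By Gauss's multiplication formula, `27^n (2/7)_n (13/21)_n (20/21)_n = (6/7)_{3n}
= (6/7)_n (6/7 + n)_{2n}`, so the coefficient equals `7^n ∏_{j<2n} (6 + 7n + 7j) / (n!)²`.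
For a prime `p ≠ 7`, every residue class modulo `p^i` meets `2n` consecutive terms of a
progression of difference `7` at least `⌊2n/p^i⌋` times, so by Legendre's formula the product
is divisible by the `p`-part of `(2n)!`, hence of `(n!)²`. For `p = 7`, `v_7((n!)²) ≤ n/3`
is absorbed by `7^n`.
-/

open Finset Nat Polynomial

theorem ascPochhammer_eval_eq_prod_range {R : Type*} [CommSemiring R] (n : ℕ) (r : R) :
    (ascPochhammer R n).eval r = ∏ j ∈ range n, (r + j) := by
  induction n with
  | zero => simp
  | succ n ih => rw [ascPochhammer_succ_eval, ih, prod_range_succ]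

theorem ascPochhammer_eval_add {R : Type*} [CommSemiring R] (m n : ℕ) (r : R) :
    (ascPochhammer R (m + n)).eval r =
      (ascPochhammer R m).eval r * (ascPochhammer R n).eval (r + m) := by
  simp only [ascPochhammer_eval_eq_prod_range, prod_range_add, Nat.cast_add, add_assoc]

theorem pow_mul_ascPochhammer_eval_div {K : Type*} [Field K] (n : ℕ) {a b : K} (hb : b ≠ 0) :
    b ^ n * (ascPochhammer K n).eval (a / b) = ∏ j ∈ range n, (a + b * j) := by
  rw [ascPochhammer_eval_eq_prod_range, ← card_range n, ← prod_const, card_range,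
    ← prod_mul_distrib]
  refine prod_congr rfl fun j _ => ?_
  field_simp

/-- Gauss's multiplication formula. -/
theorem ascPochhammer_eval_mul {K : Type*} [Field K] {m : ℕ} (hm : (m : K) ≠ 0) (n : ℕ)
    (x : K) :
    (ascPochhammer K (m * n)).eval x =
      (m : K) ^ (m * n) * ∏ i ∈ range m, (ascPochhammer K n).eval ((x + i) / m) := by
  induction n with
  | zero => simp
  | succ n ih =>
    have hstep : (ascPochhammer K m).eval (x + ↑(m * n)) =
        (m : K) ^ m * ∏ i ∈ range m, ((x + i) / m + n) := by
      rw [ascPochhammer_eval_eq_prod_range, ← card_range m, ← prod_const, card_range,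
        ← prod_mul_distrib]
      refine prod_congr rfl fun i _ => ?_
      field_simp
      push_cast
      ring
    simp only [Nat.mul_succ, ascPochhammer_eval_add, ih, hstep, ascPochhammer_succ_eval,
      prod_mul_distrib, pow_add]
    ring

theorem le_card_filter_dvd_add_mul {q b : ℕ} (hq : 0 < q) (hqb : Coprime q b) (a L : ℕ) :
    L / q ≤ #{j ∈ range L | q ∣ a + b * j} := by
  have : NeZero q := ⟨hq.ne'⟩
  set v := ((-a : ZMod q) * (b : ZMod q)⁻¹).val
  have hv (j : ℕ) (hj : j ≡ v [MOD q]) : q ∣ a + b * j := by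
    rw [← ZMod.natCast_eq_zero_iff]
    rw [← ZMod.natCast_eq_natCast_iff, ZMod.natCast_zmod_val] at hj
    push_cast
    rw [hj, mul_left_comm, ZMod.coe_mul_inv_eq_one b hqb.symm]
    ring
  calc L / q ≤ L.count (· ≡ v [MOD q]) := by rw [Nat.count_modEq_card _ hq]; omega
    _ = #{j ∈ range L | j ≡ v [MOD q]} := count_eq_card_filter_range _ _
    _ ≤ _ := card_le_card (monotone_filter_right _ fun j _ => hv j)

theorem card_filter_pow_dvd_le_factorization {p m : ℕ} (hp : p.Prime) (hm : m ≠ 0) (B : ℕ) :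
    #{i ∈ Ico 1 B | p ^ i ∣ m} ≤ m.factorization p := by
  calc #{i ∈ Ico 1 B | p ^ i ∣ m} ≤ #(Icc 1 (m.factorization p)) := by
        refine card_le_card fun i hi => ?_
        simp only [mem_filter, mem_Ico, mem_Icc] at hi ⊢
        exact ⟨hi.1.1, (hp.pow_dvd_iff_le_factorization hm).mp hi.2⟩
    _ = m.factorization p := by simp

-- Legendre's formula, with the count of multiples of `p ^ i` among `1, …, L` replaced by the
-- (no smaller) count among `L` consecutive terms of the progression.
theorem factorization_factorial_le_factorization_prod {p b : ℕ} (hp : p.Prime) (hpb : ¬ p ∣ b)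
    {a : ℕ} (ha : 0 < a) (L : ℕ) :
    (L)!.factorization p ≤ (∏ j ∈ range L, (a + b * j)).factorization p := by
  set B := log p L + 1
  have hcop (i : ℕ) : Coprime (p ^ i) b :=
    Coprime.pow_left i ((Nat.Prime.coprime_iff_not_dvd hp).mpr hpb)
  calc (L)!.factorization p = ∑ i ∈ Ico 1 B, L / p ^ i :=
        factorization_factorial hp (lt_succ_self _)
    _ ≤ ∑ i ∈ Ico 1 B, #{j ∈ range L | p ^ i ∣ a + b * j} :=
        sum_le_sum fun i _ => le_card_filter_dvd_add_mul (pow_pos hp.pos i) (hcop i) a L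
    _ = ∑ j ∈ range L, #{i ∈ Ico 1 B | p ^ i ∣ a + b * j} := by
        simp only [card_filter]
        exact sum_comm
    _ ≤ ∑ j ∈ range L, (a + b * j).factorization p :=
        sum_le_sum fun j _ => card_filter_pow_dvd_le_factorization hp (by positivity) B
    _ = (∏ j ∈ range L, (a + b * j)).factorization p :=
        (factorization_prod_apply fun j _ => by positivity).symm

theorem factorial_sq_dvd_pow_mul_prod {b : ℕ} (hb : Odd b) {a : ℕ} (ha : 0 < a) (n : ℕ) :
    n ! ^ 2 ∣ b ^ n * ∏ j ∈ range (2 * n), (a + b * j) := by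
  have hb0 : b ≠ 0 := hb.pos.ne'
  have hprod : ∏ j ∈ range (2 * n), (a + b * j) ≠ 0 :=
    prod_ne_zero_iff.mpr fun j _ => by positivity
  rw [← factorization_le_iff_dvd (by positivity) (by positivity)]
  intro p
  by_cases hp : p.Prime
  swap
  · simp [factorization_eq_zero_of_not_prime _ hp]
  rw [Nat.factorization_pow, Nat.factorization_mul (by positivity) hprod, Nat.factorization_pow]
  simp only [Finsupp.smul_apply, Finsupp.add_apply, smul_eq_mul]
  by_cases hpb : p ∣ b
  · have hp2 : p ≠ 2 := by
      rintro rfl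
      exact Nat.not_even_iff_odd.mpr hb (even_iff_two_dvd.mpr hpb)
    have hp3 : 3 ≤ p := by have := hp.two_le; omega
    have hv : 1 ≤ b.factorization p := hp.factorization_pos_of_dvd hb0 hpb
    have hleg : (n)!.factorization p ≤ n / 2 :=
      (factorization_factorial_le_div_pred hp n).trans (Nat.div_le_div_left (by omega) two_pos)
    nlinarith [Nat.div_mul_le_self n 2]
  · have hsq : 2 * (n)!.factorization p ≤ (2 * n)!.factorization p := by
      have := (factorization_le_iff_dvd (by positivity) (by positivity)).mpr
        (factorial_mul_factorial_dvd_factorial_add n n) p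
      rw [Nat.factorization_mul (by positivity) (by positivity), Finsupp.add_apply,
        ← two_mul] at this
      rwa [two_mul n]
    have := factorization_factorial_le_factorization_prod hp hpb ha (2 * n) (a := a)
    nlinarith

-- `2/7, 13/21, 20/21` are `(6/7 + i)/3` for `i = 0, 1, 2`.
theorem pow_mul_ascPochhammer_eval_2_7_13_21_20_21 (n : ℕ) :
    9261 ^ n * (ascPochhammer ℚ n).eval (2 / 7) * (ascPochhammer ℚ n).eval (13 / 21) *
        (ascPochhammer ℚ n).eval (20 / 21) =
      (ascPochhammer ℚ n).eval (6 / 7) *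
        (7 ^ n * ∏ j ∈ range (2 * n), ((6 + 7 * n : ℕ) + 7 * (j : ℚ))) := by
  have hgauss := ascPochhammer_eval_mul (K := ℚ) (m := 3) (by norm_num) n (6 / 7)
  rw [show 3 * n = n + 2 * n by ring, ascPochhammer_eval_add] at hgauss
  norm_num [prod_range_succ] at hgauss
  have htail := pow_mul_ascPochhammer_eval_div (2 * n) (a := ((6 + 7 * n : ℕ) : ℚ))
    (b := (7 : ℚ)) (by norm_num)
  rw [show ((6 + 7 * n : ℕ) : ℚ) / 7 = 6 / 7 + n by push_cast; ring] at htail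
  have h9261 : (9261 : ℚ) ^ n = 7 ^ n * 7 ^ (2 * n) * 3 ^ (n + 2 * n) := by
    rw [show n + 2 * n = 3 * n by ring, pow_mul, pow_mul, ← mul_pow, ← mul_pow]
    norm_num
  rw [← htail, h9261]
  linear_combination (-(7 ^ n * 7 ^ (2 * n) : ℚ)) * hgauss

/-- The hypergeometric series `₃F₂([2/7, 13/21, 20/21], [6/7, 1], 27·7³·x)` has
integer Taylor coefficients: for every `n`,
`9261^n (2/7)_n (13/21)_n (20/21)_n / ((6/7)_n (n!)²)` is an integer. -/
theorem hypergeom_2_7_13_21_20_21_integer_coeffs (n : ℕ) :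
    ∃ m : ℤ,
      9261 ^ n * (ascPochhammer ℚ n).eval (2 / 7) * (ascPochhammer ℚ n).eval (13 / 21) *
          (ascPochhammer ℚ n).eval (20 / 21) /
        ((ascPochhammer ℚ n).eval (6 / 7) * (Nat.factorial n : ℚ) ^ 2) = (m : ℚ) := by
  obtain ⟨m, hm⟩ := factorial_sq_dvd_pow_mul_prod (b := 7) (by decide) (a := 6 + 7 * n)
    (by positivity) n
  refine ⟨m, ?_⟩
  have hpoch : (ascPochhammer ℚ n).eval (6 / 7) ≠ 0 := (ascPochhammer_pos n _ (by norm_num)).ne'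
  have hmQ : (7 : ℚ) ^ n * ∏ j ∈ range (2 * n), ((6 + 7 * n : ℕ) + 7 * (j : ℚ)) =
      (n ! : ℚ) ^ 2 * m := by exact_mod_cast hm
  rw [pow_mul_ascPochhammer_eval_2_7_13_21_20_21, Int.cast_natCast, hmQ]
  field_simp
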